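/- arXiv:2305.02758 — 2 statements merged into one kernel-verified Lean document; each statement's English description precedes it below -/
import Mathlib

section
/- (Fan's minimax theorem, Borwein–Zhuang form.) Let X be a nonempty compact topological space, Y a nonempty set, and K : X × Y → ℝ a convex-concave like function such that for every y ∈ Y the map x ↦ K(x, y) is lower semicontinuous on X. Then min_{x ∈ X} sup_{y ∈ Y} K(x, y) = sup_{y ∈ Y} min_{x ∈ X} K(x, y), and in particular the minima on both sides are attained. -/
/-!
Weak duality `sup_y min_x K ≤ inf_x sup_y K` is general, so it suffices to find `x₀` with
`K x₀ y ≤ β` for all `y` whenever every `K (·, y)` dips below the real number `β`. If no such `x₀`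
existed, compactness and lower semicontinuity would give finitely many `y₁, …, yₙ` and a margin
`μ > β` such that every `x` has `K x yᵢ ≥ μ` for some `i`. Then the convex set
`{z ∈ ℝⁿ | ∃ x, K x yᵢ ≤ zᵢ for all i}` (convex by the convex-likeness in `x`) misses the open
orthant `{z | zᵢ < μ for all i}`; Hahn–Banach separates them by a functional with nonnegative
weights `w`, and the concave-likeness in `y` turns `∑ wᵢ K x yᵢ ≥ μ` into a single `y` with
`K x y ≥ μ > β` for all `x`, a contradiction.
-/

/-- A real-valued function `K : X → Y → ℝ` on arbitrary sets `X`, `Y` (no vector space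
structure required) is *convex-concave like* if for every `t ∈ [0,1]`: (a) for all `x₁, x₂`
there is `x₃` with `K x₃ y ≤ t * K x₁ y + (1−t) * K x₂ y` for all `y`; and (b) for all
`y₁, y₂` there is `y₃` with `t * K x y₁ + (1−t) * K x y₂ ≤ K x y₃` for all `x`. -/
def ConvexConcaveLike {X Y : Type*} (K : X → Y → ℝ) : Prop :=
  ∀ t : ℝ, 0 ≤ t → t ≤ 1 →
    (∀ x₁ x₂ : X, ∃ x₃ : X, ∀ y : Y, K x₃ y ≤ t * K x₁ y + (1 - t) * K x₂ y) ∧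
    (∀ y₁ y₂ : Y, ∃ y₃ : Y, ∀ x : X, t * K x y₁ + (1 - t) * K x y₂ ≤ K x y₃)

open Set Finset

theorem LinearMap.apply_single_nonneg_of_forall_lt {ι : Type*} [DecidableEq ι]
    (f : (ι → ℝ) →ₗ[ℝ] ℝ) {μ u : ℝ} (hf : ∀ z : ι → ℝ, (∀ i, z i < μ) → f z < u) (i : ι) :
    0 ≤ f (Pi.single i 1) := by
  by_contra! hneg
  -- moving far down along the `i`-th axis stays in the orthant but makes `f` exceed `u`
  set z₀ : ι → ℝ := fun _ => μ - 1
  set e : ι → ℝ := Pi.single i 1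
  set t := |u - f z₀| / -f e
  have ht : 0 ≤ t := div_nonneg (abs_nonneg _) (by linarith)
  have hmem : ∀ j, (z₀ - t • e) j < μ := fun j => by
    by_cases hji : j = i
    · subst hji
      simp only [Pi.sub_apply, Pi.smul_apply, Pi.single_eq_same, smul_eq_mul, mul_one, z₀, e]
      linarith
    · simp [z₀, e, hji]
  have hte : t * f e = -|u - f z₀| := by
    simp only [t]
    field_simp [hneg.ne]
  have := hf _ hmem
  rw [map_sub, map_smul, smul_eq_mul, hte] at this
  linarith [le_abs_self (u - f z₀)]

theorem exists_mem_stdSimplex_forall_le_sum {ι : Type*} [Fintype ι] {C : Set (ι → ℝ)}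
    (hC : Convex ℝ C) (hCne : C.Nonempty) {μ : ℝ}
    (hdisj : Disjoint (univ.pi fun _ => Iio μ) C) :
    ∃ w ∈ stdSimplex ℝ ι, ∀ z ∈ C, μ ≤ ∑ i, w i * z i := by
  classical
  obtain ⟨f, u, hfD, hfC⟩ := geometric_hahn_banach_open
    (convex_pi fun _ _ => convex_Iio μ) (isOpen_set_pi Set.finite_univ fun _ _ => isOpen_Iio)
    hC hdisj
  set lam : ι → ℝ := fun i => f (Pi.single i 1)
  set Λ := ∑ i, lam i
  have hf : ∀ z, f z = ∑ i, lam i * z i := fun z => by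
    conv_lhs => rw [pi_eq_sum_univ' z]
    simp [lam, map_sum, mul_comm]
  have hf_orthant : ∀ z : ι → ℝ, (∀ i, z i < μ) → f z < u := fun z hz =>
    hfD z fun i _ => hz i
  have hconst : ∀ c < μ, c * Λ < u := fun c hc => by
    simpa [hf, Λ, mul_sum, mul_comm] using hf_orthant (fun _ => c) fun _ => hc
  have hlam : ∀ i, 0 ≤ lam i :=
    f.toLinearMap.apply_single_nonneg_of_forall_lt hf_orthant
  have hΛ : 0 < Λ := by
    refine (sum_nonneg fun i _ => hlam i).lt_of_ne fun hΛ0 => ?_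
    have hzero : ∀ i, lam i = 0 := fun i =>
      (sum_eq_zero_iff_of_nonneg fun i _ => hlam i).1 hΛ0.symm i (mem_univ i)
    obtain ⟨z, hz⟩ := hCne
    have h₁ := hconst (μ - 1) (by linarith)
    have h₂ := hfC z hz
    simp only [hf, hzero, zero_mul, sum_const_zero] at h₁ h₂
    rw [show Λ = 0 from hΛ0.symm, mul_zero] at h₁
    linarith
  have hμΛ : μ * Λ ≤ u := by
    by_contra! h
    have := hconst (u / Λ) ((div_lt_iff₀ hΛ).2 h)
    rw [div_mul_cancel₀ _ hΛ.ne'] at this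
    exact lt_irrefl _ this
  refine ⟨fun i => lam i / Λ, ⟨fun i => div_nonneg (hlam i) hΛ.le, ?_⟩, fun z hz => ?_⟩
  · rw [← sum_div, div_self hΛ.ne']
  · have hsum : ∑ i, lam i / Λ * z i = (∑ i, lam i * z i) / Λ := by
      rw [sum_div]
      exact sum_congr rfl fun i _ => by ring
    rw [hsum, le_div_iff₀ hΛ, ← hf]
    exact hμΛ.trans (hfC z hz)

namespace ConvexConcaveLike

variable {X Y : Type*} {K : X → Y → ℝ}

theorem exists_sum_le (hK : ConvexConcaveLike K) {ι : Type*} (s : Finset ι) (w : ι → ℝ)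
    (ys : ι → Y) (hw₀ : ∀ i ∈ s, 0 ≤ w i) (hw₁ : ∑ i ∈ s, w i = 1) :
    ∃ y, ∀ x, ∑ i ∈ s, w i * K x (ys i) ≤ K x y := by
  classical
  induction s using Finset.induction_on generalizing w with
  | empty => simp at hw₁
  | insert a s ha ih =>
    rw [sum_insert ha] at hw₁
    set σ := ∑ i ∈ s, w i
    have hσ : 0 ≤ σ := sum_nonneg fun i hi => hw₀ i (mem_insert_of_mem hi)
    rcases hσ.eq_or_lt with hσ0 | hσpos
    · have hz : ∀ i ∈ s, w i = 0 :=
        (sum_eq_zero_iff_of_nonneg fun i hi => hw₀ i (mem_insert_of_mem hi)).1 hσ0.symm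
      refine ⟨ys a, fun x => ?_⟩
      rw [sum_insert ha, sum_eq_zero fun i hi => by rw [hz i hi, zero_mul],
        show w a = 1 by linarith]
      simp
    · obtain ⟨y₁, hy₁⟩ := ih (fun i => w i / σ)
        (fun i hi => div_nonneg (hw₀ i (mem_insert_of_mem hi)) hσ)
        (by rw [← sum_div, div_self hσpos.ne'])
      obtain ⟨y, hy⟩ := (hK (w a) (hw₀ a (mem_insert_self a s)) (by linarith)).2 (ys a) y₁
      refine ⟨y, fun x => ?_⟩
      have hscale : ∑ i ∈ s, w i * K x (ys i) = σ * ∑ i ∈ s, w i / σ * K x (ys i) := by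
        rw [mul_sum]
        exact sum_congr rfl fun i _ => by field_simp
      have h₁ := mul_le_mul_of_nonneg_left (hy₁ x) hσ
      have h₂ := hy x
      rw [show 1 - w a = σ by linarith] at h₂
      rw [sum_insert ha, hscale]
      linarith

theorem exists_forall_le_of_forall_exists_le_fintype [Nonempty X] (hK : ConvexConcaveLike K)
    {ι : Type*} [Fintype ι] (ys : ι → Y) {μ : ℝ} (h : ∀ x, ∃ i, μ ≤ K x (ys i)) :
    ∃ y, ∀ x, μ ≤ K x y := by
  set C : Set (ι → ℝ) := {z | ∃ x, ∀ i, K x (ys i) ≤ z i}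
  have hC : Convex ℝ C := by
    rintro z ⟨x₁, hx₁⟩ z' ⟨x₂, hx₂⟩ a b ha hb hab
    obtain rfl : b = 1 - a := by linarith
    obtain ⟨x₃, hx₃⟩ := (hK a ha (by linarith)).1 x₁ x₂
    refine ⟨x₃, fun i => ?_⟩
    have h₁ := mul_le_mul_of_nonneg_left (hx₁ i) ha
    have h₂ := mul_le_mul_of_nonneg_left (hx₂ i) hb
    simp only [Pi.add_apply, Pi.smul_apply, smul_eq_mul]
    linarith [hx₃ (ys i)]
  have hdisj : Disjoint (univ.pi fun _ => Iio μ) C := by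
    refine Set.disjoint_left.2 fun z hz ⟨x, hx⟩ => ?_
    obtain ⟨i, hi⟩ := h x
    exact (hi.trans (hx i)).not_gt (hz i (mem_univ i))
  obtain ⟨w, hw, hwC⟩ := exists_mem_stdSimplex_forall_le_sum hC
    ⟨_, Classical.arbitrary X, fun _ => le_rfl⟩ hdisj
  obtain ⟨y, hy⟩ := hK.exists_sum_le univ w ys (fun i _ => hw.1 i) hw.2
  exact ⟨y, fun x => (hwC _ ⟨x, fun _ => le_rfl⟩).trans (hy x)⟩

variable [TopologicalSpace X] [CompactSpace X] [Nonempty X]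

theorem exists_forall_lt_of_forall_exists_lt_fintype (hK : ConvexConcaveLike K)
    (hlsc : ∀ y, LowerSemicontinuous fun x => K x y) {ι : Type*} [Fintype ι] (ys : ι → Y)
    {β : ℝ} (h : ∀ x, ∃ i, β < K x (ys i)) : ∃ y, ∀ x, β < K x y := by
  have : Nonempty ι := let ⟨i, _⟩ := h (Classical.arbitrary X); ⟨i⟩
  have hg : LowerSemicontinuous fun x => ⨆ i, K x (ys i) :=
    lowerSemicontinuous_ciSup (fun _ => Finite.bddAbove_range _) fun i => hlsc (ys i)
  obtain ⟨xm, -, hxm⟩ :=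
    hg.lowerSemicontinuousOn univ |>.exists_isMinOn Set.univ_nonempty isCompact_univ
  -- the minimum `μ` of `max_i K (·, yᵢ)` is a uniform margin above `β`
  obtain ⟨y, hy⟩ := hK.exists_forall_le_of_forall_exists_le_fintype ys
    (μ := ⨆ i, K xm (ys i)) fun x => by
      obtain ⟨i, hi⟩ := exists_eq_ciSup_of_finite (f := fun i => K x (ys i))
      exact ⟨i, hi ▸ hxm (mem_univ x)⟩
  obtain ⟨i, hi⟩ := h xm
  have hle_max : K xm (ys i) ≤ ⨆ i, K xm (ys i) :=
    le_ciSup (f := fun i => K xm (ys i)) (Finite.bddAbove_range _) i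
  exact ⟨y, fun x => (hi.trans_le hle_max).trans_le (hy x)⟩

theorem exists_forall_le_of_forall_exists_le (hK : ConvexConcaveLike K)
    (hlsc : ∀ y, LowerSemicontinuous fun x => K x y) {β : ℝ} (hβ : ∀ y, ∃ x, K x y ≤ β) :
    ∃ x₀, ∀ y, K x₀ y ≤ β := by
  by_contra! h
  obtain ⟨u, hu⟩ := (LowerSemicontinuousOn.inter_biInter_preimage_Iic_eq_empty_iff_exists_finset
    (f := fun y x => K x y) (I := Set.univ) (c := β) isCompact_univ
    fun y _ => (hlsc y).lowerSemicontinuousOn _).1 <| by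
      simpa [Set.eq_empty_iff_forall_notMem] using h
  obtain ⟨y, hy⟩ := hK.exists_forall_lt_of_forall_exists_lt_fintype hlsc (fun i : u => (i : Y))
    fun x => let ⟨i, hi, hlt⟩ := hu x (mem_univ x); ⟨⟨i, hi⟩, hlt⟩
  obtain ⟨x, hx⟩ := hβ y
  exact (hx.trans_lt (hy x)).false

end ConvexConcaveLike

theorem fan_minimax_general {X Y : Type*} [TopologicalSpace X] [CompactSpace X]
    [Nonempty X]
    (K : X → Y → ℝ) (hK : ConvexConcaveLike K)
    (hlsc : ∀ y : Y, LowerSemicontinuous fun x => K x y) :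
    (⨅ x : X, ⨆ y : Y, (K x y : EReal)) = (⨆ y : Y, ⨅ x : X, (K x y : EReal)) ∧
    (∃ x₀ : X, (⨆ y : Y, (K x₀ y : EReal)) = ⨅ x : X, ⨆ y : Y, (K x y : EReal)) ∧
    (∀ y : Y, ∃ x₀ : X, (K x₀ y : EReal) = ⨅ x : X, (K x y : EReal)) := by
  have hattain : ∀ y, ∃ x₀ : X, (K x₀ y : EReal) = ⨅ x, (K x y : EReal) := fun y => by
    obtain ⟨x₀, -, hx₀⟩ :=
      (hlsc y).lowerSemicontinuousOn univ |>.exists_isMinOn Set.univ_nonempty isCompact_univ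
    exact ⟨x₀, le_antisymm (le_iInf fun x => EReal.coe_le_coe (hx₀ (mem_univ x))) (iInf_le _ x₀)⟩
  have hle_iSup : ∀ y, ∃ x : X, (K x y : EReal) ≤ ⨆ y, ⨅ x, (K x y : EReal) := fun y =>
    let ⟨x, hx⟩ := hattain y
    ⟨x, hx ▸ le_iSup (fun y => ⨅ x, (K x y : EReal)) y⟩
  obtain ⟨x₀, hx₀⟩ : ∃ x₀ : X, ∀ y, (K x₀ y : EReal) ≤ ⨆ y, ⨅ x, (K x y : EReal) := by
    cases h : ⨆ y, ⨅ x, (K x y : EReal) using EReal.rec with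
    | bot => exact ⟨Classical.arbitrary X, fun y =>
        let ⟨x, hx⟩ := hle_iSup y
        absurd (le_bot_iff.1 (h ▸ hx)) (EReal.coe_ne_bot _)⟩
    | top => exact ⟨Classical.arbitrary X, fun _ => le_top⟩
    | coe β =>
      obtain ⟨x₀, hx₀⟩ := hK.exists_forall_le_of_forall_exists_le hlsc fun y =>
        let ⟨x, hx⟩ := hle_iSup y
        ⟨x, EReal.coe_le_coe_iff.1 (h ▸ hx)⟩
      exact ⟨x₀, fun y => EReal.coe_le_coe (hx₀ y)⟩
  have heq := le_antisymm ((iInf_le _ x₀).trans (iSup_le hx₀))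
    (iSup_iInf_le_iInf_iSup fun y x => (K x y : EReal))
  exact ⟨heq, ⟨x₀, le_antisymm (heq ▸ iSup_le hx₀) (iInf_le _ x₀)⟩, hattain⟩

/-- K. Fan's minimax theorem, Borwein–Zhuang form.  If `X` is a nonempty
compact topological space, `Y` a nonempty set, `K : X × Y → ℝ` convex-concave like with
`K (·, y)` lower semicontinuous for every `y`, then `min_x sup_y K = sup_y min_x K` (in the
extended reals), and the minima on both sides are attained. -/
theorem fan_minimax {X Y : Type*} [TopologicalSpace X] [CompactSpace X]
    [Nonempty X] [Nonempty Y]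
    (K : X → Y → ℝ) (hK : ConvexConcaveLike K)
    (hlsc : ∀ y : Y, LowerSemicontinuous fun x => K x y) :
    (⨅ x : X, ⨆ y : Y, (K x y : EReal)) = (⨆ y : Y, ⨅ x : X, (K x y : EReal)) ∧
    (∃ x₀ : X, (⨆ y : Y, (K x₀ y : EReal)) = ⨅ x : X, ⨆ y : Y, (K x y : EReal)) ∧
    (∀ y : Y, ∃ x₀ : X, (K x₀ y : EReal) = ⨅ x : X, (K x y : EReal)) :=
  fan_minimax_general K hK hlsc
end

section
/- Let S be a compact Polish metric space, f : S → ℝ lower semicontinuous, c : S × S → [0,∞) lower semicontinuous, and λ ≥ 0. For every x ∈ S the argmin set m(x) = argmin_{y ∈ S} { f(y) + λ c(x,y) } is nonempty and compact, and the set D = { (x, y) ∈ S × S : y ∈ m(x) } is a Borel subset of S × S. -/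
/-!
The total cost `g (x, y) = f y + λ c (x, y)` is lower semicontinuous on `S × S`. On the compact
fibre `{x} × S` it therefore attains its minimum, and its argmin set is closed, being an
intersection of sublevel sets. The graph `D` is the set where `g (x, y)` is at most the minimal
value `M x = ⨅ y, g (x, y)`, and `M` is again lower semicontinuous by compactness of `S`; so `D`
is the set where one Borel function lies below another.
-/

open Set Topology

section ArgminOnCompact

variable {X Y β : Type*} [TopologicalSpace X] [TopologicalSpace Y] [CompactSpace Y]

theorem LowerSemicontinuous.exists_forall_le [LinearOrder β] [Nonempty Y] {g : Y → β}
    (hg : LowerSemicontinuous g) : ∃ y, ∀ z, g y ≤ g z := by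
  obtain ⟨y, -, hy⟩ := (hg.lowerSemicontinuousOn univ).exists_isMinOn univ_nonempty isCompact_univ
  exact ⟨y, fun z => hy (mem_univ z)⟩

theorem LowerSemicontinuous.isCompact_setOf_forall_le [LinearOrder β] {g : Y → β}
    (hg : LowerSemicontinuous g) : IsCompact {y | ∀ z, g y ≤ g z} := by
  have hinter : {y | ∀ z, g y ≤ g z} = ⋂ z, g ⁻¹' Iic (g z) := by ext; simp
  rw [hinter]
  exact (isClosed_iInter fun z => hg.isClosed_preimage (g z)).isCompact

variable [ConditionallyCompleteLinearOrder β] [Nonempty Y] {g : X × Y → β}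

theorem LowerSemicontinuous.exists_forall_le_and_ciInf_snd_eq (hg : LowerSemicontinuous g)
    (x : X) :
    ∃ y, (∀ z, g (x, y) ≤ g (x, z)) ∧ ⨅ z, g (x, z) = g (x, y) := by
  obtain ⟨y, hy⟩ := (hg.comp (Continuous.prodMk_right x)).exists_forall_le
  have hleast : IsLeast (range fun z => g (x, z)) (g (x, y)) := by
    refine ⟨⟨y, rfl⟩, ?_⟩
    rintro _ ⟨z, rfl⟩
    exact hy z
  exact ⟨y, hy, hleast.isGLB.ciInf_eq⟩

theorem LowerSemicontinuous.ciInf_snd (hg : LowerSemicontinuous g) :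
    LowerSemicontinuous fun x => ⨅ y, g (x, y) := by
  intro x t ht
  obtain ⟨y₀, hy₀, hM₀⟩ := hg.exists_forall_le_and_ciInf_snd_eq x
  replace ht : t < g (x, y₀) := hM₀ ▸ ht
  have hfibre : ∀ y, t < g (x, y) := fun y => ht.trans_le (hy₀ y)
  -- a strict lower bound on the compact fibre persists on nearby fibres
  have hnear : ∀ᶠ x' in 𝓝 x, ∀ y ∈ (univ : Set Y), t < g (x', y) :=
    isCompact_univ.eventually_forall_of_forall_eventually fun y _ => hg (x, y) t (hfibre y)
  filter_upwards [hnear] with x' hx'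
  obtain ⟨y', -, hM'⟩ := hg.exists_forall_le_and_ciInf_snd_eq x'
  exact hM' ▸ hx' y' (mem_univ y')

theorem LowerSemicontinuous.measurableSet_setOf_forall_le [MeasurableSpace X]
    [OpensMeasurableSpace X] [MeasurableSpace Y] [OpensMeasurableSpace (X × Y)]
    [TopologicalSpace β] [OrderTopology β] [SecondCountableTopology β] [MeasurableSpace β]
    [BorelSpace β] (hg : LowerSemicontinuous g) :
    MeasurableSet {p : X × Y | ∀ z, g p ≤ g (p.1, z)} := by
  have hgraph : {p : X × Y | ∀ z, g p ≤ g (p.1, z)} = {p | g p ≤ ⨅ z, g (p.1, z)} := by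
    ext p
    obtain ⟨y, hy, hM⟩ := hg.exists_forall_le_and_ciInf_snd_eq p.1
    exact ⟨le_ciInf, fun h z => h.trans (hM ▸ hy z)⟩
  rw [hgraph]
  exact measurableSet_le hg.measurable (hg.ciInf_snd.measurable.comp measurable_fst)

end ArgminOnCompact

theorem argmin_nonempty_compact_and_graph_borel_general {S : Type*} [MetricSpace S]
    [CompactSpace S] [MeasurableSpace S] [BorelSpace S]
    (f : S → ℝ) (hf : LowerSemicontinuous f)
    (c : S × S → ℝ) (hc : LowerSemicontinuous c)
    (l : ℝ) (hl : 0 ≤ l) :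
    (∀ x : S,
      ({y : S | ∀ z : S, f y + l * c (x, y) ≤ f z + l * c (x, z)}).Nonempty ∧
      IsCompact {y : S | ∀ z : S, f y + l * c (x, y) ≤ f z + l * c (x, z)}) ∧
    MeasurableSet
      {p : S × S | ∀ z : S, f p.2 + l * c (p.1, p.2) ≤ f z + l * c (p.1, z)} := by
  set g : S × S → ℝ := fun p => f p.2 + l * c p
  have hg : LowerSemicontinuous g := (hf.comp continuous_snd).add <|
    (continuous_const_mul l).comp_lowerSemicontinuous hc (monotone_mul_left_of_nonneg hl)
  refine ⟨fun x => ⟨?_, (hg.comp (Continuous.prodMk_right x)).isCompact_setOf_forall_le⟩, ?_⟩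
  · have : Nonempty S := ⟨x⟩
    exact (hg.comp (Continuous.prodMk_right x)).exists_forall_le
  · rcases isEmpty_or_nonempty S
    · exact (toFinite _).measurableSet
    · exact hg.measurableSet_setOf_forall_le

/-- For `S` a compact Polish metric space, `f` lower semicontinuous,
`c ≥ 0` lower semicontinuous and `λ ≥ 0`: for every `x` the argmin set
`m(x) = argmin_{y ∈ S} (f y + λ c (x, y))` is nonempty and compact, and
`D = {(x, y) : y ∈ m(x)}` is a Borel subset of `S × S`. -/
theorem argmin_nonempty_compact_and_graph_borel {S : Type*} [MetricSpace S] [PolishSpace S]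
    [CompactSpace S] [MeasurableSpace S] [BorelSpace S]
    (f : S → ℝ) (hf : LowerSemicontinuous f)
    (c : S × S → ℝ) (hc0 : ∀ p, 0 ≤ c p) (hc : LowerSemicontinuous c)
    (l : ℝ) (hl : 0 ≤ l) :
    (∀ x : S,
      ({y : S | ∀ z : S, f y + l * c (x, y) ≤ f z + l * c (x, z)}).Nonempty ∧
      IsCompact {y : S | ∀ z : S, f y + l * c (x, y) ≤ f z + l * c (x, z)}) ∧
    MeasurableSet
      {p : S × S | ∀ z : S, f p.2 + l * c (p.1, p.2) ≤ f z + l * c (p.1, z)} :=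
  argmin_nonempty_compact_and_graph_borel_general f hf c hc l hl
end
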